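/- arXiv:math/0404459 — 4 statements merged into one kernel-verified Lean document; each statement's English description precedes it below -/
import Mathlib

section
/- Let G be a group and let b, c, d ∈ G satisfy b² = 1, c² = 1, b c b = c b c, (c d)³ = 1, and suppose that c d c commutes with b. Then (d b)³ = 1. -/
lemma conj_cube {G : Type*} [Group G] (a x : G) (ha : a * a = 1) :
    (a * x * a) ^ 3 = a * x ^ 3 * a := by
  have h : a⁻¹ = a := by rw [inv_eq_iff_mul_eq_one, ha]
  calc (a * x * a) ^ 3 = (a * x * a⁻¹) ^ 3 := by rw [h]
    _ = a * x ^ 3 * a⁻¹ := by rw [← conj_pow]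
    _ = a * x ^ 3 * a := by rw [h]

/-- If `b² = c² = 1`, `bcb = cbc`, `(cd)³ = 1` and `cdc` commutes with `b`,
then `(db)³ = 1`. -/
theorem stmt2 {G : Type*} [Group G] (b c d : G)
    (hb : b ^ 2 = 1) (hc : c ^ 2 = 1)
    (hbcb : b * c * b = c * b * c) (hcd : (c * d) ^ 3 = 1)
    (hcomm : (c * d * c) * b = b * (c * d * c)) :
    (d * b) ^ 3 = 1 := by
  have hb1 : b * b = 1 := by rw [← sq]; exact hb
  have hc1 : c * c = 1 := by rw [← sq]; exact hc
  have Hc : ∀ x : G, c * (c * x) = x := fun x => by rw [← mul_assoc, hc1, one_mul]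
  have Hcomm : ∀ x : G, b * (c * (d * (c * x))) = c * (d * (c * (b * x))) := by
    intro x
    calc b * (c * (d * (c * x))) = (b * (c * d * c)) * x := by group
      _ = ((c * d * c) * b) * x := by rw [hcomm]
      _ = c * (d * (c * (b * x))) := by group
  have Hbcb : b * (c * b) = c * (b * c) := by
    calc b * (c * b) = b * c * b := by group
      _ = c * b * c := hbcb
      _ = c * (b * c) := by group
  have key : b * (c * (d * b)) = c * (d * (b * c)) := by
    have e1 : b * (c * (d * b)) = b * (c * (d * (c * (c * b)))) := by rw [Hc]
    rw [e1, Hcomm, Hbcb, Hc]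
  have hdb : d * b = c * (b * (c * d) * b) * c := by
    have : b * (c * d) * b = c * (d * b) * c := by
      calc b * (c * d) * b = b * (c * (d * b)) := by group
        _ = c * (d * (b * c)) := key
        _ = c * (d * b) * c := by group
    rw [this]
    calc d * b = (c * c) * (d * b) * (c * c) := by rw [hc1]; group
      _ = c * (c * (d * b) * c) * c := by group
  rw [hdb, conj_cube _ _ hc1, conj_cube _ _ hb1, hcd, mul_one, hb1, mul_one, hc1]
end

section
/- In the group C, for any three edges e, f, g of T that meet at a common vertex, the element u_e commutes with u_g u_f u_g. -/
/-- The vertices of the graph `T`: the 18 triangles of the triangulation of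
the torus obtained from the 3×3 square grid with opposite sides identified.
A triangle is labelled by its unit cell `(a, b) : (ℤ/3)²` together with a
Boolean which is `false` for the lower triangle (below the diagonal of the
cell) and `true` for the upper one. -/
abbrev VT : Type := (ZMod 3 × ZMod 3) × Bool

/-- The 27 edges of the graph `T`, joining pairs of distinct triangles which
share a common side: edge `(c, 0)` is dual to the diagonal of the cell `c`,
edge `(c, 1)` to the left side of `c` and edge `(c, 2)` to the bottom side
of `c`. -/
abbrev ET : Type := (ZMod 3 × ZMod 3) × Fin 3

/-- One endpoint of an edge of `T`. -/
def endA (e : ET) : VT :=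
  if e.2 = 1 then (e.1, true) else (e.1, false)

/-- The other endpoint of an edge of `T`. -/
def endB (e : ET) : VT :=
  if e.2 = 0 then (e.1, true)
  else if e.2 = 1 then ((e.1.1 - 1, e.1.2), false)
  else ((e.1.1, e.1.2 - 1), true)

/-- Incidence between edges and vertices of `T`. -/
def incidentT (e : ET) (v : VT) : Prop := v = endA e ∨ v = endB e

/-- For each of the 9 grid vertices `p` of the torus, the six edges (in cyclic
order) of the hexagonal cycle in `T` formed by the six triangles
containing `p`. -/
def hexEdge (p : ZMod 3 × ZMod 3) : Fin 6 → ET := fun k =>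
  if k = 0 then (p, 2)
  else if k = 1 then (p, 0)
  else if k = 2 then (p, 1)
  else if k = 3 then ((p.1 - 1, p.2), 2)
  else if k = 4 then ((p.1 - 1, p.2 - 1), 0)
  else ((p.1, p.2 - 1), 1)

/-- The free-group generator corresponding to an edge `e` of `T`. -/
def fe (e : ET) : FreeGroup ET := FreeGroup.of e

/-- The relations of the presentation of the group `C`: `u_e² = 1`;
`u_e u_f = u_f u_e` when `e, f` have no common vertex;
`u_e u_f u_e = u_f u_e u_f` when `e, f` share exactly one vertex; and the
cyclic relation `u_{e₁} u_{e₂} u_{e₃} u_{e₄} u_{e₅} = u_{e₂} u_{e₃} u_{e₄} u_{e₅} u_{e₆}`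
for each of the nine hexagonal cycles. -/
def CRels : Set (FreeGroup ET) :=
  { r | (∃ e : ET, r = fe e * fe e)
      ∨ (∃ e f : ET, (∀ v : VT, ¬ (incidentT e v ∧ incidentT f v)) ∧
            r = fe e * fe f * (fe f * fe e)⁻¹)
      ∨ (∃ e f : ET, (∃! v : VT, incidentT e v ∧ incidentT f v) ∧
            r = fe e * fe f * fe e * (fe f * fe e * fe f)⁻¹)
      ∨ (∃ p : ZMod 3 × ZMod 3,
            r = (fe (hexEdge p 0) * fe (hexEdge p 1) * fe (hexEdge p 2) *
                 fe (hexEdge p 3) * fe (hexEdge p 4)) *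
                (fe (hexEdge p 1) * fe (hexEdge p 2) * fe (hexEdge p 3) *
                 fe (hexEdge p 4) * fe (hexEdge p 5))⁻¹) }

/-- The group `C`, given by the above presentation. -/
abbrev Cgrp : Type := PresentedGroup CRels

/-- The generator `u_e` of `C` corresponding to the edge `e` of `T`. -/
def uC (e : ET) : Cgrp := PresentedGroup.of e

/-- The transposition in `S₁₈` exchanging the two triangles joined by the
edge `e` of `T`. -/
def tE (e : ET) : Equiv.Perm VT := Equiv.swap (endA e) (endB e)

/-! ### Auxiliary machinery -/

instance {α : Sort*} (p : α → Prop) [Decidable (∃ x, p x ∧ ∀ y, p y → y = x)] :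
    Decidable (∃! x, p x) :=
  decidable_of_iff (∃ x, p x ∧ ∀ y, p y → y = x) Iff.rfl

instance (e : ET) (v : VT) : Decidable (incidentT e v) :=
  decidable_of_iff (v = endA e ∨ v = endB e) Iff.rfl

section RewriteHelpers

variable {G : Type*} [Group G]

private lemma sq' {a : G} (h : a * a = 1) : ∀ x : G, a * (a * x) = x := by
  intro x; rw [← mul_assoc, h, one_mul]

private lemma comm' {a b : G} (h : a * b = b * a) : ∀ x : G, a * (b * x) = b * (a * x) := by
  intro x; rw [← mul_assoc, h, mul_assoc]

private lemma braid' {a b : G} (h : a * b * a = b * a * b) :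
    ∀ x : G, a * (b * (a * x)) = b * (a * (b * x)) := by
  intro x; rw [← mul_assoc, ← mul_assoc, h, mul_assoc, mul_assoc]

/-- All the relations among the six generators of one hexagonal cycle. -/
structure HexData (a b c d e f : G) : Prop where
  sa : a * a = 1
  sb : b * b = 1
  sc : c * c = 1
  sd : d * d = 1
  se : e * e = 1
  sf : f * f = 1
  bab : a * b * a = b * a * b
  bbc : b * c * b = c * b * c
  bcd : c * d * c = d * c * d
  bde : d * e * d = e * d * e
  bef : e * f * e = f * e * f
  bfa : f * a * f = a * f * a
  cac : a * c = c * a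
  cad : a * d = d * a
  cae : a * e = e * a
  cbd : b * d = d * b
  cbe : b * e = e * b
  cbf : b * f = f * b
  cce : c * e = e * c
  ccf : c * f = f * c
  cdf : d * f = f * d
  R : a * b * c * d * e = b * c * d * e * f

namespace HexData

variable {a b c d e f : G}

lemma key' (H : HexData a b c d e f) :
    ∀ x : G, a * (b * (a * x)) = c * (d * (e * (f * (e * (d * (c * x)))))) := by
  have A2 : ∀ x : G, a * (b * (c * (d * (e * x)))) = b * (c * (d * (e * (f * x)))) := by
    intro x; simp only [← mul_assoc]; rw [H.R]
  have A' : ∀ x : G, a * x = b * (c * (d * (e * (f * (e * (d * (c * (b * x)))))))) := by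
    intro x
    have h1 : a * x = a * (b * (c * (d * (e * (e * (d * (c * (b * x)))))))) := by
      rw [sq' H.se, sq' H.sd, sq' H.sc, sq' H.sb]
    rw [h1, A2]
  intro x
  rw [A', A', sq' H.sb, ← braid' H.bbc,
      comm' H.cbd, comm' H.cbe, comm' H.cbf,
      ← comm' H.cbd, ← comm' H.cbe, ← comm' H.cbf,
      ← comm' H.cbe, ← comm' H.cbd, braid' H.bbc,
      comm' H.cbe, comm' H.cbd, braid' H.bbc,
      ← braid' H.bcd,
      comm' H.cce, ← comm' H.cce,
      ← braid' H.bde,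
      comm' H.ccf, comm' H.cdf, ← comm' H.ccf, ← comm' H.cdf,
      ← braid' H.bef,
      comm' H.cce, ← braid' H.bde, braid' H.bcd, sq' H.sd,
      ← comm' H.cce, braid' H.bcd, ← braid' H.bde, sq' H.sd,
      ← comm' H.cdf, sq' H.sd,
      comm' H.cce, comm' H.ccf, comm' H.cce, sq' H.sc,
      comm' H.cbd, comm' H.cbe, comm' H.cbf, comm' H.cbe, comm' H.cbd, sq' H.sb]

lemma key (H : HexData a b c d e f) : a * b * a = c * d * e * f * e * d * c := by
  have h := H.key' 1
  simp only [mul_one] at h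
  simp only [mul_assoc]
  exact h

lemma rotR (H : HexData a b c d e f) : b * c * d * e * f = c * d * e * f * a := by
  have B' : ∀ x : G, b * x = c * (d * (e * (f * (a * (f * (e * (d * (c * x)))))))) := by
    intro x
    have h1 : b * x = a * (a * (b * (a * (a * x)))) := by rw [sq' H.sa, sq' H.sa]
    rw [h1, H.key',
        ← comm' H.cac, ← comm' H.cad, ← comm' H.cae,
        comm' H.cac, comm' H.cad, comm' H.cae,
        ← braid' H.bfa]
  have h2 : ∀ x : G, b * (c * (d * (e * (f * x)))) = c * (d * (e * (f * (a * x)))) := by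
    intro x
    rw [B', sq' H.sc, sq' H.sd, sq' H.se, sq' H.sf]
  have h3 := h2 1
  simp only [mul_one] at h3
  simp only [mul_assoc]
  exact h3

lemma rot (H : HexData a b c d e f) : HexData b c d e f a :=
  ⟨H.sb, H.sc, H.sd, H.se, H.sf, H.sa,
   H.bbc, H.bcd, H.bde, H.bef, H.bfa, H.bab,
   H.cbd, H.cbe, H.cbf, H.cce, H.ccf, H.cac.symm, H.cdf, H.cad.symm, H.cae.symm,
   H.rotR⟩

lemma c12 (H : HexData a b c d e f) {h : G}
    (h3 : h * c = c * h) (h4 : h * d = d * h) (h5 : h * e = e * h) (h6 : h * f = f * h) :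
    h * (a * b * a) = a * b * a * h := by
  rw [H.key]
  have k3 : Commute h c := h3
  have k4 : Commute h d := h4
  have k5 : Commute h e := h5
  have k6 : Commute h f := h6
  exact (((((k3.mul_right k4).mul_right k5).mul_right k6).mul_right k5).mul_right k4).mul_right k3

end HexData

end RewriteHelpers

/-! ### Consequences of the presentation -/

lemma relC {r : FreeGroup ET} (hr : r ∈ CRels) : PresentedGroup.mk CRels r = 1 :=
  (QuotientGroup.eq_one_iff r).mpr (Subgroup.subset_normalClosure hr)

lemma sqC (e : ET) : uC e * uC e = 1 := by
  have h := relC (show fe e * fe e ∈ CRels from Or.inl ⟨e, rfl⟩)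
  simp only [map_mul] at h
  exact h

lemma commC (e f : ET) (hc : ∀ v : VT, ¬ (incidentT e v ∧ incidentT f v)) :
    uC e * uC f = uC f * uC e := by
  have h := relC (show fe e * fe f * (fe f * fe e)⁻¹ ∈ CRels from
    Or.inr (Or.inl ⟨e, f, hc, rfl⟩))
  simp only [map_mul, map_inv] at h
  rw [mul_inv_eq_one] at h
  exact h

lemma braidC (e f : ET) (hb : ∃! v : VT, incidentT e v ∧ incidentT f v) :
    uC e * uC f * uC e = uC f * uC e * uC f := by
  have h := relC (show fe e * fe f * fe e * (fe f * fe e * fe f)⁻¹ ∈ CRels from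
    Or.inr (Or.inr (Or.inl ⟨e, f, hb, rfl⟩)))
  simp only [map_mul, map_inv] at h
  rw [mul_inv_eq_one] at h
  exact h

lemma hexC (p : ZMod 3 × ZMod 3) :
    uC (p, 2) * uC (p, 0) * uC (p, 1) * uC ((p.1 - 1, p.2), 2) * uC ((p.1 - 1, p.2 - 1), 0)
      = uC (p, 0) * uC (p, 1) * uC ((p.1 - 1, p.2), 2) * uC ((p.1 - 1, p.2 - 1), 0)
        * uC ((p.1, p.2 - 1), 1) := by
  have h := relC (show _ ∈ CRels from Or.inr (Or.inr (Or.inr ⟨p, rfl⟩)))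
  simp only [map_mul, map_inv] at h
  rw [mul_inv_eq_one] at h
  exact h

/-! ### Decidable side conditions -/

lemma adj12 : ∀ p : ZMod 3 × ZMod 3, ∃! v : VT, incidentT (p, 2) v ∧ incidentT (p, 0) v := by
  decide
lemma adj23 : ∀ p : ZMod 3 × ZMod 3, ∃! v : VT, incidentT (p, 0) v ∧ incidentT (p, 1) v := by
  decide
lemma adj34 : ∀ p : ZMod 3 × ZMod 3,
    ∃! v : VT, incidentT (p, 1) v ∧ incidentT ((p.1 - 1, p.2), 2) v := by decide
lemma adj45 : ∀ p : ZMod 3 × ZMod 3,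
    ∃! v : VT, incidentT ((p.1 - 1, p.2), 2) v ∧ incidentT ((p.1 - 1, p.2 - 1), 0) v := by decide
lemma adj56 : ∀ p : ZMod 3 × ZMod 3,
    ∃! v : VT, incidentT ((p.1 - 1, p.2 - 1), 0) v ∧ incidentT ((p.1, p.2 - 1), 1) v := by decide
lemma adj61 : ∀ p : ZMod 3 × ZMod 3,
    ∃! v : VT, incidentT ((p.1, p.2 - 1), 1) v ∧ incidentT (p, 2) v := by decide

lemma dis13 : ∀ p : ZMod 3 × ZMod 3, ∀ v : VT,
    ¬ (incidentT (p, 2) v ∧ incidentT (p, 1) v) := by decide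
lemma dis14 : ∀ p : ZMod 3 × ZMod 3, ∀ v : VT,
    ¬ (incidentT (p, 2) v ∧ incidentT ((p.1 - 1, p.2), 2) v) := by decide
lemma dis15 : ∀ p : ZMod 3 × ZMod 3, ∀ v : VT,
    ¬ (incidentT (p, 2) v ∧ incidentT ((p.1 - 1, p.2 - 1), 0) v) := by decide
lemma dis24 : ∀ p : ZMod 3 × ZMod 3, ∀ v : VT,
    ¬ (incidentT (p, 0) v ∧ incidentT ((p.1 - 1, p.2), 2) v) := by decide
lemma dis25 : ∀ p : ZMod 3 × ZMod 3, ∀ v : VT,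
    ¬ (incidentT (p, 0) v ∧ incidentT ((p.1 - 1, p.2 - 1), 0) v) := by decide
lemma dis26 : ∀ p : ZMod 3 × ZMod 3, ∀ v : VT,
    ¬ (incidentT (p, 0) v ∧ incidentT ((p.1, p.2 - 1), 1) v) := by decide
lemma dis35 : ∀ p : ZMod 3 × ZMod 3, ∀ v : VT,
    ¬ (incidentT (p, 1) v ∧ incidentT ((p.1 - 1, p.2 - 1), 0) v) := by decide
lemma dis36 : ∀ p : ZMod 3 × ZMod 3, ∀ v : VT,
    ¬ (incidentT (p, 1) v ∧ incidentT ((p.1, p.2 - 1), 1) v) := by decide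
lemma dis46 : ∀ p : ZMod 3 × ZMod 3, ∀ v : VT,
    ¬ (incidentT ((p.1 - 1, p.2), 2) v ∧ incidentT ((p.1, p.2 - 1), 1) v) := by decide

/-- The hexagon relations, packaged. -/
lemma hexData_at (p : ZMod 3 × ZMod 3) :
    HexData (uC (p, 2)) (uC (p, 0)) (uC (p, 1)) (uC ((p.1 - 1, p.2), 2))
      (uC ((p.1 - 1, p.2 - 1), 0)) (uC ((p.1, p.2 - 1), 1)) :=
  ⟨sqC _, sqC _, sqC _, sqC _, sqC _, sqC _,
   braidC _ _ (adj12 p), braidC _ _ (adj23 p), braidC _ _ (adj34 p),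
   braidC _ _ (adj45 p), braidC _ _ (adj56 p), braidC _ _ (adj61 p),
   commC _ _ (dis13 p), commC _ _ (dis14 p), commC _ _ (dis15 p),
   commC _ _ (dis24 p), commC _ _ (dis25 p), commC _ _ (dis26 p),
   commC _ _ (dis35 p), commC _ _ (dis36 p), commC _ _ (dis46 p),
   hexC p⟩

/-! ### Classification of edges through a vertex -/

lemma edges_of_false : ∀ (a b : ZMod 3) (e : ET), incidentT e ((a, b), false) →
    e = ((a, b), 0) ∨ e = ((a, b), 2) ∨ e = ((a + 1, b), 1) := by decide

lemma edges_of_true : ∀ (a b : ZMod 3) (e : ET), incidentT e ((a, b), true) →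
    e = ((a, b), 0) ∨ e = ((a, b), 1) ∨ e = ((a, b + 1), 2) := by decide

/-! ### Braid side conditions for normalising the middle factor -/

lemma nb1 : ∀ a b : ZMod 3,
    ∃! v : VT, incidentT ((a, b), 0) v ∧ incidentT ((a, b), 2) v := by decide
lemma nb2 : ∀ a b : ZMod 3,
    ∃! v : VT, incidentT ((a, b), 2) v ∧ incidentT ((a + 1, b), 1) v := by decide
lemma nb3 : ∀ a b : ZMod 3,
    ∃! v : VT, incidentT ((a + 1, b), 1) v ∧ incidentT ((a, b), 0) v := by decide
lemma nb4 : ∀ a b : ZMod 3,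
    ∃! v : VT, incidentT ((a, b), 1) v ∧ incidentT ((a, b), 0) v := by decide
lemma nb5 : ∀ a b : ZMod 3,
    ∃! v : VT, incidentT ((a, b + 1), 2) v ∧ incidentT ((a, b), 1) v := by decide
lemma nb6 : ∀ a b : ZMod 3,
    ∃! v : VT, incidentT ((a, b), 0) v ∧ incidentT ((a, b + 1), 2) v := by decide

/-! ### Disjointness of the external edge from the four far hexagon edges -/

lemma f1_1 : ∀ a b : ZMod 3, ∀ v : VT,
    ¬ (incidentT ((a + 1, b), 1) v ∧ incidentT ((a, b), 1) v) := by decide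
lemma f1_2 : ∀ a b : ZMod 3, ∀ v : VT,
    ¬ (incidentT ((a + 1, b), 1) v ∧ incidentT ((a - 1, b), 2) v) := by decide
lemma f1_3 : ∀ a b : ZMod 3, ∀ v : VT,
    ¬ (incidentT ((a + 1, b), 1) v ∧ incidentT ((a - 1, b - 1), 0) v) := by decide
lemma f1_4 : ∀ a b : ZMod 3, ∀ v : VT,
    ¬ (incidentT ((a + 1, b), 1) v ∧ incidentT ((a, b - 1), 1) v) := by decide

lemma f2_1 : ∀ a b : ZMod 3, ∀ v : VT,
    ¬ (incidentT ((a, b), 0) v ∧ incidentT ((a, b - 1), 0) v) := by decide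
lemma f2_2 : ∀ a b : ZMod 3, ∀ v : VT,
    ¬ (incidentT ((a, b), 0) v ∧ incidentT ((a + 1, b - 1), 1) v) := by decide
lemma f2_3 : ∀ a b : ZMod 3, ∀ v : VT,
    ¬ (incidentT ((a, b), 0) v ∧ incidentT ((a + 1, b), 2) v) := by decide
lemma f2_4 : ∀ a b : ZMod 3, ∀ v : VT,
    ¬ (incidentT ((a, b), 0) v ∧ incidentT ((a + 1, b), 0) v) := by decide

lemma f3_1 : ∀ a b : ZMod 3, ∀ v : VT,
    ¬ (incidentT ((a, b), 2) v ∧ incidentT ((a + 1, b + 1), 2) v) := by decide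
lemma f3_2 : ∀ a b : ZMod 3, ∀ v : VT,
    ¬ (incidentT ((a, b), 2) v ∧ incidentT ((a + 1, b + 1), 0) v) := by decide
lemma f3_3 : ∀ a b : ZMod 3, ∀ v : VT,
    ¬ (incidentT ((a, b), 2) v ∧ incidentT ((a + 1, b + 1), 1) v) := by decide
lemma f3_4 : ∀ a b : ZMod 3, ∀ v : VT,
    ¬ (incidentT ((a, b), 2) v ∧ incidentT ((a, b + 1), 2) v) := by decide

lemma t1_1 : ∀ a b : ZMod 3, ∀ v : VT,
    ¬ (incidentT ((a, b + 1), 2) v ∧ incidentT ((a - 1, b), 2) v) := by decide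
lemma t1_2 : ∀ a b : ZMod 3, ∀ v : VT,
    ¬ (incidentT ((a, b + 1), 2) v ∧ incidentT ((a - 1, b - 1), 0) v) := by decide
lemma t1_3 : ∀ a b : ZMod 3, ∀ v : VT,
    ¬ (incidentT ((a, b + 1), 2) v ∧ incidentT ((a, b - 1), 1) v) := by decide
lemma t1_4 : ∀ a b : ZMod 3, ∀ v : VT,
    ¬ (incidentT ((a, b + 1), 2) v ∧ incidentT ((a, b), 2) v) := by decide

lemma t2_1 : ∀ a b : ZMod 3, ∀ v : VT,
    ¬ (incidentT ((a, b), 0) v ∧ incidentT ((a, b + 1), 0) v) := by decide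
lemma t2_2 : ∀ a b : ZMod 3, ∀ v : VT,
    ¬ (incidentT ((a, b), 0) v ∧ incidentT ((a, b + 1), 1) v) := by decide
lemma t2_3 : ∀ a b : ZMod 3, ∀ v : VT,
    ¬ (incidentT ((a, b), 0) v ∧ incidentT ((a - 1, b + 1), 2) v) := by decide
lemma t2_4 : ∀ a b : ZMod 3, ∀ v : VT,
    ¬ (incidentT ((a, b), 0) v ∧ incidentT ((a - 1, b), 0) v) := by decide

lemma t3_1 : ∀ a b : ZMod 3, ∀ v : VT,
    ¬ (incidentT ((a, b), 1) v ∧ incidentT ((a + 1, b), 1) v) := by decide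
lemma t3_2 : ∀ a b : ZMod 3, ∀ v : VT,
    ¬ (incidentT ((a, b), 1) v ∧ incidentT ((a + 1, b + 1), 2) v) := by decide
lemma t3_3 : ∀ a b : ZMod 3, ∀ v : VT,
    ¬ (incidentT ((a, b), 1) v ∧ incidentT ((a + 1, b + 1), 0) v) := by decide
lemma t3_4 : ∀ a b : ZMod 3, ∀ v : VT,
    ¬ (incidentT ((a, b), 1) v ∧ incidentT ((a + 1, b + 1), 1) v) := by decide


/-- In `C`, for any three (distinct) edges `e, f, g` of `T` meeting at a
common vertex, `u_e` commutes with `u_g u_f u_g`. -/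
theorem stmt6 (e f g : ET) (hef : e ≠ f) (hfg : f ≠ g) (heg : e ≠ g)
    (hmeet : ∃ v : VT, incidentT e v ∧ incidentT f v ∧ incidentT g v) :
    uC e * (uC g * uC f * uC g) = (uC g * uC f * uC g) * uC e := by
  obtain ⟨v, hev, hfv, hgv⟩ := hmeet
  obtain ⟨⟨a, b⟩, bl⟩ := v
  cases bl with
  | false =>
    rcases edges_of_false a b e hev with rfl | rfl | rfl
    · -- e = A
      rcases edges_of_false a b f hfv with rfl | rfl | rfl
      · -- f = A
        exact absurd rfl hef
      · -- f = B
        rcases edges_of_false a b g hgv with rfl | rfl | rfl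
        · -- g = A
          exact absurd rfl heg
        · -- g = B
          exact absurd rfl hfg
        · -- g = D
          have H := hexData_at (a + 1, b)
          simp only [add_sub_cancel_right] at H
          exact H.rot.rot.c12 (commC _ _ (f2_1 a b)) (commC _ _ (f2_2 a b)) (commC _ _ (f2_3 a b)) (commC _ _ (f2_4 a b))
      · -- f = D
        rcases edges_of_false a b g hgv with rfl | rfl | rfl
        · -- g = A
          exact absurd rfl heg
        · -- g = B
          have H := hexData_at (a + 1, b)
          simp only [add_sub_cancel_right] at H
          rw [braidC _ _ (nb2 a b)]
          exact H.rot.rot.c12 (commC _ _ (f2_1 a b)) (commC _ _ (f2_2 a b)) (commC _ _ (f2_3 a b)) (commC _ _ (f2_4 a b))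
        · -- g = D
          exact absurd rfl hfg
    · -- e = B
      rcases edges_of_false a b f hfv with rfl | rfl | rfl
      · -- f = A
        rcases edges_of_false a b g hgv with rfl | rfl | rfl
        · -- g = A
          exact absurd rfl hfg
        · -- g = B
          exact absurd rfl heg
        · -- g = D
          have H := hexData_at (a + 1, b + 1)
          simp only [add_sub_cancel_right] at H
          rw [braidC _ _ (nb3 a b)]
          exact H.rot.rot.rot.rot.c12 (commC _ _ (f3_1 a b)) (commC _ _ (f3_2 a b)) (commC _ _ (f3_3 a b)) (commC _ _ (f3_4 a b))
      · -- f = B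
        exact absurd rfl hef
      · -- f = D
        rcases edges_of_false a b g hgv with rfl | rfl | rfl
        · -- g = A
          have H := hexData_at (a + 1, b + 1)
          simp only [add_sub_cancel_right] at H
          exact H.rot.rot.rot.rot.c12 (commC _ _ (f3_1 a b)) (commC _ _ (f3_2 a b)) (commC _ _ (f3_3 a b)) (commC _ _ (f3_4 a b))
        · -- g = B
          exact absurd rfl heg
        · -- g = D
          exact absurd rfl hfg
    · -- e = D
      rcases edges_of_false a b f hfv with rfl | rfl | rfl
      · -- f = A
        rcases edges_of_false a b g hgv with rfl | rfl | rfl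
        · -- g = A
          exact absurd rfl hfg
        · -- g = B
          have H := hexData_at (a, b)
          exact H.c12 (commC _ _ (f1_1 a b)) (commC _ _ (f1_2 a b)) (commC _ _ (f1_3 a b)) (commC _ _ (f1_4 a b))
        · -- g = D
          exact absurd rfl heg
      · -- f = B
        rcases edges_of_false a b g hgv with rfl | rfl | rfl
        · -- g = A
          have H := hexData_at (a, b)
          rw [braidC _ _ (nb1 a b)]
          exact H.c12 (commC _ _ (f1_1 a b)) (commC _ _ (f1_2 a b)) (commC _ _ (f1_3 a b)) (commC _ _ (f1_4 a b))
        · -- g = B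
          exact absurd rfl hfg
        · -- g = D
          exact absurd rfl heg
      · -- f = D
        exact absurd rfl hef
  | true =>
    rcases edges_of_true a b e hev with rfl | rfl | rfl
    · -- e = A
      rcases edges_of_true a b f hfv with rfl | rfl | rfl
      · -- f = A
        exact absurd rfl hef
      · -- f = B
        rcases edges_of_true a b g hgv with rfl | rfl | rfl
        · -- g = A
          exact absurd rfl heg
        · -- g = B
          exact absurd rfl hfg
        · -- g = D
          have H := hexData_at (a, b + 1)
          simp only [add_sub_cancel_right] at H
          rw [braidC _ _ (nb5 a b)]
          exact H.rot.rot.rot.rot.rot.c12 (commC _ _ (t2_1 a b)) (commC _ _ (t2_2 a b)) (commC _ _ (t2_3 a b)) (commC _ _ (t2_4 a b))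
      · -- f = D
        rcases edges_of_true a b g hgv with rfl | rfl | rfl
        · -- g = A
          exact absurd rfl heg
        · -- g = B
          have H := hexData_at (a, b + 1)
          simp only [add_sub_cancel_right] at H
          exact H.rot.rot.rot.rot.rot.c12 (commC _ _ (t2_1 a b)) (commC _ _ (t2_2 a b)) (commC _ _ (t2_3 a b)) (commC _ _ (t2_4 a b))
        · -- g = D
          exact absurd rfl hfg
    · -- e = B
      rcases edges_of_true a b f hfv with rfl | rfl | rfl
      · -- f = A
        rcases edges_of_true a b g hgv with rfl | rfl | rfl
        · -- g = A
          exact absurd rfl hfg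
        · -- g = B
          exact absurd rfl heg
        · -- g = D
          have H := hexData_at (a + 1, b + 1)
          simp only [add_sub_cancel_right] at H
          exact H.rot.rot.rot.c12 (commC _ _ (t3_1 a b)) (commC _ _ (t3_2 a b)) (commC _ _ (t3_3 a b)) (commC _ _ (t3_4 a b))
      · -- f = B
        exact absurd rfl hef
      · -- f = D
        rcases edges_of_true a b g hgv with rfl | rfl | rfl
        · -- g = A
          have H := hexData_at (a + 1, b + 1)
          simp only [add_sub_cancel_right] at H
          rw [braidC _ _ (nb6 a b)]
          exact H.rot.rot.rot.c12 (commC _ _ (t3_1 a b)) (commC _ _ (t3_2 a b)) (commC _ _ (t3_3 a b)) (commC _ _ (t3_4 a b))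
        · -- g = B
          exact absurd rfl heg
        · -- g = D
          exact absurd rfl hfg
    · -- e = D
      rcases edges_of_true a b f hfv with rfl | rfl | rfl
      · -- f = A
        rcases edges_of_true a b g hgv with rfl | rfl | rfl
        · -- g = A
          exact absurd rfl hfg
        · -- g = B
          have H := hexData_at (a, b)
          rw [braidC _ _ (nb4 a b)]
          exact H.rot.c12 (commC _ _ (t1_1 a b)) (commC _ _ (t1_2 a b)) (commC _ _ (t1_3 a b)) (commC _ _ (t1_4 a b))
        · -- g = D
          exact absurd rfl heg
      · -- f = B
        rcases edges_of_true a b g hgv with rfl | rfl | rfl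
        · -- g = A
          have H := hexData_at (a, b)
          exact H.rot.c12 (commC _ _ (t1_1 a b)) (commC _ _ (t1_2 a b)) (commC _ _ (t1_3 a b)) (commC _ _ (t1_4 a b))
        · -- g = B
          exact absurd rfl hfg
        · -- g = D
          exact absurd rfl heg
      · -- f = D
        exact absurd rfl hef
end

section
/- The element z has infinite order in the group H. -/
/-- Generators of the group `H`: `x i`, `y i` for `i : Fin 18`, and `z`. -/
inductive HGen : Type
  | x : Fin 18 → HGen
  | y : Fin 18 → HGen
  | z : HGen

/-- The free-group generator corresponding to `x i`. -/
def fx (i : Fin 18) : FreeGroup HGen := FreeGroup.of (HGen.x i)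
/-- The free-group generator corresponding to `y i`. -/
def fy (i : Fin 18) : FreeGroup HGen := FreeGroup.of (HGen.y i)
/-- The free-group generator corresponding to `z`. -/
def fz : FreeGroup HGen := FreeGroup.of HGen.z

/-- The relations of the presentation of `H`:
`[xᵢ, xⱼ] = [yᵢ, yⱼ] = [xᵢ, yⱼ] = 1` for `i ≠ j`, `[xᵢ, yᵢ] = z`,
and `z` commutes with all the generators. -/
def HRels : Set (FreeGroup HGen) :=
  { r | (∃ i j : Fin 18, i ≠ j ∧ r = fx i * fx j * (fx i)⁻¹ * (fx j)⁻¹)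
      ∨ (∃ i j : Fin 18, i ≠ j ∧ r = fy i * fy j * (fy i)⁻¹ * (fy j)⁻¹)
      ∨ (∃ i j : Fin 18, i ≠ j ∧ r = fx i * fy j * (fx i)⁻¹ * (fy j)⁻¹)
      ∨ (∃ i : Fin 18, r = fx i * fy i * (fx i)⁻¹ * (fy i)⁻¹ * fz⁻¹)
      ∨ (∃ i : Fin 18, r = fx i * fz * (fx i)⁻¹ * fz⁻¹)
      ∨ (∃ i : Fin 18, r = fy i * fz * (fy i)⁻¹ * fz⁻¹) }

/-- The group `H`, given by the above presentation. -/
abbrev Hgrp : Type := PresentedGroup HRels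

/-- The generator `xᵢ` of `H`. -/
def xH (i : Fin 18) : Hgrp := PresentedGroup.of (HGen.x i)
/-- The generator `yᵢ` of `H`. -/
def yH (i : Fin 18) : Hgrp := PresentedGroup.of (HGen.y i)
/-- The generator `z` of `H`. -/
def zH : Hgrp := PresentedGroup.of HGen.z


open Matrix in
/-- Heisenberg group on `ℤ^18`. -/
@[ext] structure Heis : Type where
  a : Fin 18 → ℤ
  b : Fin 18 → ℤ
  c : ℤ

namespace Heis
open Matrix

instance : Mul Heis := ⟨fun p q => ⟨p.a + q.a, p.b + q.b, p.c + q.c + p.a ⬝ᵥ q.b⟩⟩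
instance : One Heis := ⟨⟨0, 0, 0⟩⟩
instance : Inv Heis := ⟨fun p => ⟨-p.a, -p.b, -p.c + p.a ⬝ᵥ p.b⟩⟩

@[simp] lemma mul_a (p q : Heis) : (p * q).a = p.a + q.a := rfl
@[simp] lemma mul_b (p q : Heis) : (p * q).b = p.b + q.b := rfl
@[simp] lemma mul_c (p q : Heis) : (p * q).c = p.c + q.c + p.a ⬝ᵥ q.b := rfl
@[simp] lemma one_a : (1 : Heis).a = 0 := rfl
@[simp] lemma one_b : (1 : Heis).b = 0 := rfl
@[simp] lemma one_c : (1 : Heis).c = 0 := rfl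
@[simp] lemma inv_a (p : Heis) : (p⁻¹).a = -p.a := rfl
@[simp] lemma inv_b (p : Heis) : (p⁻¹).b = -p.b := rfl
@[simp] lemma inv_c (p : Heis) : (p⁻¹).c = -p.c + p.a ⬝ᵥ p.b := rfl

instance : Group Heis where
  mul_assoc p q r := by
    ext <;> simp [add_dotProduct, dotProduct_add] <;> ring
  one_mul p := by ext <;> simp
  mul_one p := by ext <;> simp
  inv_mul_cancel p := by
    ext <;> simp [neg_dotProduct] <;> ring

lemma commutator (p q : Heis) :
    p * q * p⁻¹ * q⁻¹ = ⟨0, 0, p.a ⬝ᵥ q.b - q.a ⬝ᵥ p.b⟩ := by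
  ext <;> simp [add_dotProduct, dotProduct_add,
    neg_dotProduct, dotProduct_neg] <;> ring

end Heis

def hf : HGen → Heis
  | HGen.x i => ⟨Pi.single i 1, 0, 0⟩
  | HGen.y i => ⟨0, Pi.single i 1, 0⟩
  | HGen.z => ⟨0, 0, 1⟩

lemma hrels : ∀ r ∈ HRels, FreeGroup.lift hf r = 1 := by
  intro r hr
  rcases hr with ⟨i, j, hij, rfl⟩ | ⟨i, j, hij, rfl⟩ | ⟨i, j, hij, rfl⟩ |
      ⟨i, rfl⟩ | ⟨i, rfl⟩ | ⟨i, rfl⟩ <;>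
    simp only [fx, fy, fz, map_mul, map_inv, FreeGroup.lift_apply_of] <;>
    first
    | (rw [Heis.commutator]; ext <;>
        simp [hf, single_dotProduct, dotProduct_single,
          Pi.single_apply, hij, (hij.symm : _ ≠ _)])
    | (rw [Heis.commutator]; ext <;>
        simp [hf, single_dotProduct, dotProduct_single, Pi.single_apply])

def φH : Hgrp →* Heis := PresentedGroup.toGroup hrels

lemma heis_z_pow (n : ℕ) : (⟨0, 0, 1⟩ : Heis) ^ n = ⟨0, 0, (n : ℤ)⟩ := by
  induction n with
  | zero => rfl
  | succ n ih => ext <;> simp [pow_succ, ih]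

/-- The element `z` has infinite order in `H`. -/
theorem stmt7 : ¬ IsOfFinOrder zH := by
  intro h
  have h2 : IsOfFinOrder (φH zH) := MonoidHom.isOfFinOrder φH h
  have hz : φH zH = ⟨0, 0, 1⟩ := PresentedGroup.toGroup.of hrels
  rw [hz] at h2
  obtain ⟨n, hn, h1⟩ := isOfFinOrder_iff_pow_eq_one.mp h2
  rw [heis_z_pow] at h1
  have : (n : ℤ) = 0 := congrArg Heis.c h1
  omega
end

section
/- The center of H is exactly the subgroup generated by z. -/
/-!
The integer Heisenberg group of triples `(a, b, c) ∈ ℤ^18 × ℤ^18 × ℤ` with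
`(a, b, c) * (a', b', c') = (a + a', b + b', c + c' + a ⬝ᵥ b')` is a model of `H`
(`xᵢ ↦ (eᵢ, 0, 0)`, `yᵢ ↦ (0, eᵢ, 0)`, `z ↦ (0, 0, 1)`). The image of a central element of `H`
commutes with the images of all `xᵢ, yᵢ`, which forces its `a`- and `b`-coordinates to vanish.
On the other hand, the pairwise commutators of the generators lie in `⟨z⟩`, so
`[H, H] ≤ ⟨z⟩`; and the `(a, b)`-coordinates have a section `ℤ^18 × ℤ^18 → H^ab`
(`z` dies in `H^ab`, being a commutator), so an element
with vanishing `(a, b)`-coordinates lies in `[H, H]`.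
-/

open Subgroup
open scoped commutatorElement

theorem Subgroup.normal_of_le_center {G : Type*} [Group G] {N : Subgroup G}
    (h : N ≤ center G) : N.Normal :=
  ⟨fun n hn g => by rwa [mem_center_iff.mp (h hn) g, mul_inv_cancel_right]⟩

theorem commutator_le_of_commutatorElement_mem {G : Type*} [Group G] {S : Set G}
    (hS : closure S = ⊤) {N : Subgroup G} [N.Normal] (h : ∀ s ∈ S, ∀ t ∈ S, ⁅s, t⁆ ∈ N) :
    commutator G ≤ N := by
  rw [← Normal.quotient_commutative_iff_commutator_le]
  have hcomm : ∀ q ∈ QuotientGroup.mk' N '' S, ∀ q' ∈ QuotientGroup.mk' N '' S,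
      q * q' = q' * q := by
    rintro _ ⟨s, hs, rfl⟩ _ ⟨t, ht, rfl⟩
    rw [← commutatorElement_eq_one_iff_mul_comm, ← map_commutatorElement,
      QuotientGroup.mk'_apply, QuotientGroup.eq_one_iff]
    exact h s hs t ht
  have htop : closure (QuotientGroup.mk' N '' S) = ⊤ := by
    rw [← MonoidHom.map_closure, hS, ← MonoidHom.range_eq_map, MonoidHom.range_eq_top]
    exact QuotientGroup.mk'_surjective N
  refine isMulCommutative_iff.mpr fun q q' => ?_
  have := isMulCommutative_iff.mp (isMulCommutative_closure hcomm)
    ⟨q, htop ▸ mem_top q⟩ ⟨q', htop ▸ mem_top q'⟩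
  exact congrArg Subtype.val this

@[ext]
structure Heisenberg (ι : Type*) where
  a : ι → ℤ
  b : ι → ℤ
  c : ℤ

namespace Heisenberg

variable {ι : Type*}

instance : One (Heisenberg ι) := ⟨⟨0, 0, 0⟩⟩

lemma one_def : (1 : Heisenberg ι) = ⟨0, 0, 0⟩ := rfl

variable [Fintype ι]

instance : Mul (Heisenberg ι) := ⟨fun p q => ⟨p.a + q.a, p.b + q.b, p.c + q.c + p.a ⬝ᵥ q.b⟩⟩
instance : Inv (Heisenberg ι) := ⟨fun p => ⟨-p.a, -p.b, -p.c + p.a ⬝ᵥ p.b⟩⟩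

lemma mul_def (p q : Heisenberg ι) :
    p * q = ⟨p.a + q.a, p.b + q.b, p.c + q.c + p.a ⬝ᵥ q.b⟩ := rfl
lemma inv_def (p : Heisenberg ι) : p⁻¹ = ⟨-p.a, -p.b, -p.c + p.a ⬝ᵥ p.b⟩ := rfl

instance : Group (Heisenberg ι) :=
  Group.ofLeftAxioms
    (fun p q r => by ext <;> simp [mul_def, add_dotProduct, dotProduct_add, add_assoc]; ring)
    (fun p => by ext <;> simp [mul_def, one_def])
    (fun p => by ext <;> simp [mul_def, one_def, inv_def])

lemma commutatorElement_eq (p q : Heisenberg ι) :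
    ⁅p, q⁆ = ⟨0, 0, p.a ⬝ᵥ q.b - q.a ⬝ᵥ p.b⟩ := by
  ext <;> simp [commutatorElement_def, mul_def, inv_def, add_dotProduct]
  ring

def proj : Heisenberg ι →* Multiplicative ((ι → ℤ) × (ι → ℤ)) where
  toFun p := .ofAdd (p.a, p.b)
  map_one' := rfl
  map_mul' _ _ := rfl

lemma proj_eq_one_of_commute [DecidableEq ι] {p : Heisenberg ι}
    (hx : ∀ i, Commute p ⟨Pi.single i 1, 0, 0⟩) (hy : ∀ i, Commute p ⟨0, Pi.single i 1, 0⟩) :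
    proj p = 1 := by
  have hc : ∀ q : Heisenberg ι, Commute p q → p.a ⬝ᵥ q.b = q.a ⬝ᵥ p.b := fun q h => by
    have := congrArg c (commutatorElement_eq_one_iff_commute.mpr h)
    rw [commutatorElement_eq] at this
    exact sub_eq_zero.mp this
  have ha : p.a = 0 := funext fun i => by simpa [dotProduct_single] using hc _ (hy i)
  have hb : p.b = 0 := funext fun i => by simpa [single_dotProduct] using (hc _ (hx i)).symm
  simp [proj, ha, hb]

end Heisenberg

def heisenbergGen : HGen → Heisenberg (Fin 18)
  | .x i => ⟨Pi.single i 1, 0, 0⟩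
  | .y i => ⟨0, Pi.single i 1, 0⟩
  | .z => ⟨0, 0, 1⟩

lemma lift_heisenbergGen_eq_one : ∀ r ∈ HRels, FreeGroup.lift heisenbergGen r = 1 := by
  rintro r (⟨i, j, hij, rfl⟩ | ⟨i, j, hij, rfl⟩ | ⟨i, j, hij, rfl⟩ | ⟨i, rfl⟩ | ⟨i, rfl⟩ |
    ⟨i, rfl⟩) <;>
  simp [fx, fy, fz, heisenbergGen, ← commutatorElement_def, Heisenberg.commutatorElement_eq,
    Heisenberg.one_def, Pi.single_eq_of_ne', *]

def toHeisenberg : Hgrp →* Heisenberg (Fin 18) := PresentedGroup.toGroup lift_heisenbergGen_eq_one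

@[simp] lemma toHeisenberg_of (s : HGen) : toHeisenberg (.of s) = heisenbergGen s :=
  PresentedGroup.toGroup.of _

lemma commutatorElement_xH_xH (i j : Fin 18) : ⁅xH i, xH j⁆ = 1 := by
  obtain rfl | h := eq_or_ne i j
  · exact commutatorElement_self _
  · exact PresentedGroup.one_of_mem (Or.inl ⟨i, j, h, rfl⟩)

lemma commutatorElement_yH_yH (i j : Fin 18) : ⁅yH i, yH j⁆ = 1 := by
  obtain rfl | h := eq_or_ne i j
  · exact commutatorElement_self _
  · exact PresentedGroup.one_of_mem (Or.inr <| Or.inl ⟨i, j, h, rfl⟩)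

lemma commutatorElement_xH_yH {i j : Fin 18} (h : i ≠ j) : ⁅xH i, yH j⁆ = 1 :=
  PresentedGroup.one_of_mem (Or.inr <| Or.inr <| Or.inl ⟨i, j, h, rfl⟩)

lemma commutatorElement_xH_yH_self (i : Fin 18) : ⁅xH i, yH i⁆ = zH :=
  mul_inv_eq_one.mp <| PresentedGroup.one_of_mem (Or.inr <| Or.inr <| Or.inr <| Or.inl ⟨i, rfl⟩)

lemma commutatorElement_xH_zH (i : Fin 18) : ⁅xH i, zH⁆ = 1 :=
  PresentedGroup.one_of_mem (Or.inr <| Or.inr <| Or.inr <| Or.inr <| Or.inl ⟨i, rfl⟩)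

lemma commutatorElement_yH_zH (i : Fin 18) : ⁅yH i, zH⁆ = 1 :=
  PresentedGroup.one_of_mem (Or.inr <| Or.inr <| Or.inr <| Or.inr <| Or.inr ⟨i, rfl⟩)

lemma zH_mem_center : zH ∈ center Hgrp := by
  rw [← centralizer_univ, ← coe_top, ← PresentedGroup.closure_range_of, centralizer_closure,
    mem_centralizer_iff]
  rintro _ ⟨i | i | _, rfl⟩
  · exact commutatorElement_eq_one_iff_mul_comm.mp (commutatorElement_xH_zH i)
  · exact commutatorElement_eq_one_iff_mul_comm.mp (commutatorElement_yH_zH i)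
  · rfl

lemma closure_zH_le_center : closure {zH} ≤ center Hgrp :=
  (closure_le _).mpr (Set.singleton_subset_iff.mpr zH_mem_center)

lemma commutatorElement_of_of_mem_closure_zH (s t : HGen) :
    ⁅(PresentedGroup.of s : Hgrp), PresentedGroup.of t⁆ ∈ closure {zH} := by
  have hone {g h : Hgrp} (hgh : ⁅g, h⁆ = 1) : ⁅g, h⁆ ∈ closure {zH} := hgh ▸ one_mem _
  have hzH (g : Hgrp) : Commute g zH := mem_center_iff.mp zH_mem_center g
  have hxy (i j : Fin 18) : ⁅xH i, yH j⁆ ∈ closure {zH} := by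
    obtain rfl | hij := eq_or_ne i j
    · exact (commutatorElement_xH_yH_self i).symm ▸ mem_closure_singleton_self zH
    · exact hone (commutatorElement_xH_yH hij)
  rcases s with i | i | _ <;> rcases t with j | j | _
  · exact hone (commutatorElement_xH_xH i j)
  · exact hxy i j
  · exact hone (commutatorElement_eq_one_iff_commute.mpr (hzH _))
  · exact commutatorElement_inv (xH j) (yH i) ▸ inv_mem (hxy j i)
  · exact hone (commutatorElement_yH_yH i j)
  · exact hone (commutatorElement_eq_one_iff_commute.mpr (hzH _))
  all_goals exact hone (commutatorElement_eq_one_iff_commute.mpr (hzH _).symm)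

lemma commutator_le_closure_zH : commutator Hgrp ≤ closure {zH} :=
  have := normal_of_le_center closure_zH_le_center
  commutator_le_of_commutatorElement_mem (PresentedGroup.closure_range_of _)
    (by rintro _ ⟨s, rfl⟩ _ ⟨t, rfl⟩; exact commutatorElement_of_of_mem_closure_zH s t)

def coordsToAbelianization :
    Multiplicative ((Fin 18 → ℤ) × (Fin 18 → ℤ)) →* Abelianization Hgrp where
  toFun v := (∏ i, .of (xH i) ^ v.toAdd.1 i) * ∏ i, .of (yH i) ^ v.toAdd.2 i
  map_one' := by simp
  map_mul' v w := by
    simp only [toAdd_mul, Prod.fst_add, Prod.snd_add, Pi.add_apply, zpow_add,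
      Finset.prod_mul_distrib]
    exact mul_mul_mul_comm _ _ _ _

lemma coordsToAbelianization_comp :
    coordsToAbelianization.comp (Heisenberg.proj.comp toHeisenberg) = Abelianization.of := by
  refine PresentedGroup.ext fun s => ?_
  rcases s with i | i | _ <;>
    simp only [MonoidHom.comp_apply, toHeisenberg_of, heisenbergGen]
  · simp [coordsToAbelianization, Heisenberg.proj, Pi.single_apply, xH]
  · simp [coordsToAbelianization, Heisenberg.proj, Pi.single_apply, yH]
  · rw [← zH, ← commutatorElement_xH_yH_self 0, map_commutatorElement,
      commutatorElement_eq_one_iff_mul_comm.mpr (mul_comm _ _)]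
    exact map_one coordsToAbelianization

lemma ker_proj_comp_toHeisenberg_le_commutator :
    (Heisenberg.proj.comp toHeisenberg).ker ≤ commutator Hgrp := fun g hg => by
  rw [← Abelianization.ker_of, MonoidHom.mem_ker, ← coordsToAbelianization_comp,
    MonoidHom.comp_apply, MonoidHom.mem_ker.mp hg, map_one]

/-- The center of `H` is exactly the subgroup generated by `z`. -/
theorem stmt10 : Subgroup.center Hgrp = Subgroup.closure {zH} := by
  refine le_antisymm (fun g hg => ?_) closure_zH_le_center
  have hcomm (h : Hgrp) : Commute (toHeisenberg g) (toHeisenberg h) :=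
    (Commute.map (mem_center_iff.mp hg h).symm toHeisenberg)
  have hproj : Heisenberg.proj (toHeisenberg g) = 1 :=
    Heisenberg.proj_eq_one_of_commute (fun i => by simpa [xH, heisenbergGen] using hcomm (xH i))
      (fun i => by simpa [yH, heisenbergGen] using hcomm (yH i))
  exact commutator_le_closure_zH (ker_proj_comp_toHeisenberg_le_commutator hproj)
end
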